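/- arXiv:2106.02858 — 6 statements merged into one kernel-verified Lean document; each statement's English description precedes it below -/
import Mathlib

section
/- Let E be a complex Banach space, B : E → E a continuous ℂ-linear map, ω > 0, T = 2π/ω, and φ₊, φ₋ ∈ E. Suppose U : ℝ → E is continuously differentiable on [0,T] and satisfies U'(t) + B U(t) = e^{iωt} φ₊ + e^{-iωt} φ₋ for all t ∈ [0,T]. Then the filtered field F U := (2/T) ∫₀ᵀ U(t) e^{-iωt} dt satisfies iω (F U) + B (F U) = 2 φ₊ + (ω/π)(U(0) − U(T)). -/
open Real intervalIntegral

/-- The filtered field solves the time-harmonic equation with the physical source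
augmented by `(ω/π)` times the periodicity misfit. -/
theorem stmt_2
    (E : Type*) [NormedAddCommGroup E] [NormedSpace ℂ E] [CompleteSpace E]
    (B : E →L[ℂ] E) (ω : ℝ) (hω : 0 < ω) (T : ℝ) (hT : T = 2 * π / ω)
    (φp φm : E) (U U' : ℝ → E)
    (hderiv : ∀ t ∈ Set.Icc (0 : ℝ) T, HasDerivAt U (U' t) t)
    (hcont : ContinuousOn U' (Set.Icc (0 : ℝ) T))
    (heq : ∀ t ∈ Set.Icc (0 : ℝ) T,
      U' t + B (U t) = Complex.exp (Complex.I * ω * t) • φp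
        + Complex.exp (-(Complex.I * ω * t)) • φm)
    (FU : E)
    (hFU : FU = ((2 / T : ℝ) : ℂ) • ∫ t in (0 : ℝ)..T, Complex.exp (-(Complex.I * ω * t)) • U t) :
    (Complex.I * ω) • FU + B FU = (2 : ℂ) • φp + ((ω / π : ℝ) : ℂ) • (U 0 - U T) := by
  have hπ : (0:ℝ) < π := Real.pi_pos
  have hT0 : 0 < T := by rw [hT]; positivity
  have huIcc : Set.uIcc (0:ℝ) T = Set.Icc 0 T := Set.uIcc_of_le hT0.le
  set c : ℂ := -(Complex.I * ω) with hc
  have hωT : (ω : ℂ) * T = 2 * π := by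
    have h : (ω : ℝ) * T = 2 * π := by rw [hT]; field_simp
    calc (ω : ℂ) * T = ((ω * T : ℝ) : ℂ) := by push_cast; ring
    _ = 2 * π := by rw [h]; push_cast; ring
  have hexpT : Complex.exp (c * T) = 1 := by
    have h1 : c * T = (-1 : ℤ) * (2 * π * Complex.I) := by
      rw [hc]
      have : (Complex.I * ω) * T = Complex.I * ((ω:ℂ) * T) := by ring
      rw [neg_mul, this, hωT]; push_cast; ring
    rw [h1, Complex.exp_int_mul_two_pi_mul_I]
  have hexp2T : Complex.exp (2 * c * T) = 1 := by
    have h1 : 2 * c * T = (-2 : ℤ) * (2 * π * Complex.I) := by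
      rw [hc]
      have : 2 * -(Complex.I * ω) * T = -2 * Complex.I * ((ω:ℂ) * T) := by ring
      rw [this, hωT]; push_cast; ring
    rw [h1, Complex.exp_int_mul_two_pi_mul_I]
  have hform : ∀ t : ℝ, -(Complex.I * ω * t) = c * t := by
    intro t; rw [hc]; ring
  have hlin : ∀ t : ℝ, HasDerivAt (fun s : ℝ => Complex.exp (c * s)) (Complex.exp (c * t) * c) t := by
    intro t
    have h : HasDerivAt (fun s : ℝ => c * (s : ℂ)) c t := by
      simpa only [mul_one, id_eq] using ((hasDerivAt_id (t : ℂ)).const_mul c).comp_ofReal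
    exact h.cexp
  have hUcont : ContinuousOn U (Set.Icc (0:ℝ) T) :=
    fun t ht => (hderiv t ht).continuousAt.continuousWithinAt
  have hg : ∀ t ∈ Set.Icc (0:ℝ) T,
      HasDerivAt (fun s : ℝ => Complex.exp (c * s) • U s)
        (Complex.exp (c * t) • U' t + (Complex.exp (c * t) * c) • U t) t := by
    intro t ht
    exact (hlin t).smul (hderiv t ht)
  have hcexp : Continuous fun t : ℝ => Complex.exp (c * t) :=
    Complex.continuous_exp.comp (continuous_const.mul Complex.continuous_ofReal)
  have hint1 : IntervalIntegrable (fun t : ℝ => (Complex.exp (c * t) * c) • U t)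
      MeasureTheory.volume 0 T := by
    apply ContinuousOn.intervalIntegrable
    rw [huIcc]
    exact ((hcexp.mul continuous_const).continuousOn).smul hUcont
  have hint2 : IntervalIntegrable (fun t : ℝ => Complex.exp (c * t) • U' t)
      MeasureTheory.volume 0 T := by
    apply ContinuousOn.intervalIntegrable
    rw [huIcc]
    exact hcexp.continuousOn.smul hcont
  have hintJ : IntervalIntegrable (fun t : ℝ => Complex.exp (c * t) • U t)
      MeasureTheory.volume 0 T := by
    apply ContinuousOn.intervalIntegrable
    rw [huIcc]
    exact hcexp.continuousOn.smul hUcont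
  set J : E := ∫ t in (0:ℝ)..T, Complex.exp (c * t) • U t with hJ
  have hFTC : (∫ t in (0:ℝ)..T, (Complex.exp (c * t) • U' t + (Complex.exp (c * t) * c) • U t))
      = U T - U 0 := by
    rw [intervalIntegral.integral_eq_sub_of_hasDerivAt (fun t ht => hg t (huIcc ▸ ht))
      (hint2.add hint1)]
    simp [hexpT]
  rw [intervalIntegral.integral_add hint2 hint1] at hFTC
  have hI1 : (∫ t in (0:ℝ)..T, (Complex.exp (c * t) * c) • U t) = c • J := by
    rw [hJ, ← intervalIntegral.integral_smul]
    apply intervalIntegral.integral_congr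
    intro t _
    simp [smul_smul, mul_comm]
  have hI2 : (∫ t in (0:ℝ)..T, Complex.exp (c * t) • U' t)
      = (T : ℂ) • φp + ((Complex.exp (2 * c * T) - 1) / (2 * c)) • φm - B J := by
    have hcne : c ≠ 0 := by
      rw [hc]
      simp [Complex.I_ne_zero, hω.ne']
    have h2c : (2 : ℂ) * c ≠ 0 := mul_ne_zero two_ne_zero hcne
    have hrw : ∀ t ∈ Set.Icc (0:ℝ) T,
        Complex.exp (c * t) • U' t
          = φp + Complex.exp (2 * c * t) • φm - Complex.exp (c * t) • B (U t) := by
      intro t ht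
      have h := heq t ht
      have hU' : U' t = Complex.exp (Complex.I * ω * t) • φp
          + Complex.exp (-(Complex.I * ω * t)) • φm - B (U t) := by
        rw [← h]; abel
      rw [hU', smul_sub, smul_add, smul_smul, smul_smul, ← Complex.exp_add, ← Complex.exp_add,
        hform t]
      have e1 : c * t + Complex.I * ω * t = 0 := by rw [hc]; ring
      have e2 : c * t + c * t = 2 * c * t := by ring
      rw [e1, e2, Complex.exp_zero, one_smul]
    have hiBU : IntervalIntegrable (fun t : ℝ => Complex.exp (c * t) • B (U t))
        MeasureTheory.volume 0 T := by
      apply ContinuousOn.intervalIntegrable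
      rw [huIcc]
      exact hcexp.continuousOn.smul (B.continuous.comp_continuousOn hUcont)
    have hiφm : IntervalIntegrable (fun t : ℝ => Complex.exp (2 * c * t) • φm)
        MeasureTheory.volume 0 T := by
      apply ContinuousOn.intervalIntegrable
      apply Continuous.continuousOn
      exact ((Complex.continuous_exp.comp (continuous_const.mul
        Complex.continuous_ofReal)).smul continuous_const)
    calc (∫ t in (0:ℝ)..T, Complex.exp (c * t) • U' t)
        = ∫ t in (0:ℝ)..T, (φp + Complex.exp (2 * c * t) • φm - Complex.exp (c * t) • B (U t)) := by
          apply intervalIntegral.integral_congr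
          intro t ht
          exact hrw t (huIcc ▸ ht)
      _ = (T : ℂ) • φp + ((Complex.exp (2 * c * T) - 1) / (2 * c)) • φm - B J := by
          rw [intervalIntegral.integral_sub ((_root_.intervalIntegrable_const).add hiφm) hiBU,
            intervalIntegral.integral_add _root_.intervalIntegrable_const hiφm]
          congr 1
          · congr 1
            · rw [intervalIntegral.integral_const, sub_zero]
              exact (Complex.coe_smul T φp).symm
            · rw [intervalIntegral.integral_smul_const]
              rw [show (∫ t in (0:ℝ)..T, Complex.exp (2 * c * t)) =
                  (Complex.exp (2 * c * T) - Complex.exp (2 * c * 0)) / (2 * c) by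
                simpa [mul_assoc] using integral_exp_mul_complex (a := 0) (b := T) h2c]
              rw [mul_zero, Complex.exp_zero]
          · rw [hJ, ← B.intervalIntegral_comp_comm hintJ]
            apply intervalIntegral.integral_congr
            intro t _
            exact (B.map_smul _ _).symm
  rw [hI2, hI1, hexp2T, sub_self, zero_div, zero_smul, add_zero] at hFTC
  have hkey : (Complex.I * ω) • J + B J = (T : ℂ) • φp + (U 0 - U T) := by
    have h2 : -((Complex.I * ω) • J) - B J = U T - U 0 - (T : ℂ) • φp := by
      rw [← neg_smul, ← hc]
      rw [← hFTC]; abel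
    calc (Complex.I * ω) • J + B J
        = -(-((Complex.I * ω) • J) - B J) := by abel
      _ = -(U T - U 0 - (T : ℂ) • φp) := by rw [h2]
      _ = (T : ℂ) • φp + (U 0 - U T) := by abel
  have hFUJ : FU = ((2 / T : ℝ) : ℂ) • J := by
    rw [hFU, hJ]
    congr 1
    apply intervalIntegral.integral_congr
    intro t _
    simp only [hform]
  have hscal : ((ω / π : ℝ) : ℂ) = ((2 / T : ℝ) : ℂ) := by
    norm_cast
    rw [hT]
    field_simp
  rw [hFUJ, hscal, smul_comm ((Complex.I * (ω:ℂ))) (((2 / T : ℝ) : ℂ)), B.map_smul,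
    ← smul_add, hkey, smul_add, smul_smul]
  congr 1
  rw [show ((2 / T : ℝ) : ℂ) * (T : ℂ) = 2 by norm_cast; field_simp]
end

section
/- Let E be a complex Banach space, B : E → E a continuous ℂ-linear map, ω > 0, T = 2π/ω, and φ₊, φ₋ ∈ E. Suppose U : ℝ → E is continuously differentiable on [0,T], satisfies U'(t) + B U(t) = e^{iωt} φ₊ + e^{-iωt} φ₋ for all t ∈ [0,T], and is T-periodic in the sense that U(T) = U(0). Then the filtered field F U := (2/T) ∫₀ᵀ U(t) e^{-iωt} dt is an exact solution of the time-harmonic equation: iω (F U) + B (F U) = 2 φ₊. -/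
open Real intervalIntegral

/-- Filtering any time-periodic solution of the time-dependent problem recovers an exact
solution of the time-harmonic equation. -/
theorem stmt_3
    (E : Type*) [NormedAddCommGroup E] [NormedSpace ℂ E] [CompleteSpace E]
    (B : E →L[ℂ] E) (ω : ℝ) (hω : 0 < ω) (T : ℝ) (hT : T = 2 * π / ω)
    (φp φm : E) (U U' : ℝ → E)
    (hderiv : ∀ t ∈ Set.Icc (0 : ℝ) T, HasDerivAt U (U' t) t)
    (hcont : ContinuousOn U' (Set.Icc (0 : ℝ) T))
    (heq : ∀ t ∈ Set.Icc (0 : ℝ) T,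
      U' t + B (U t) = Complex.exp (Complex.I * ω * t) • φp
        + Complex.exp (-(Complex.I * ω * t)) • φm)
    (hper : U T = U 0)
    (FU : E)
    (hFU : FU = ((2 / T : ℝ) : ℂ) • ∫ t in (0 : ℝ)..T, Complex.exp (-(Complex.I * ω * t)) • U t) :
    (Complex.I * ω) • FU + B FU = (2 : ℂ) • φp := by
  have hπ : (0:ℝ) < π := Real.pi_pos
  have hT0 : (0:ℝ) < T := by rw [hT]; positivity
  have hωT : ω * T = 2 * π := by rw [hT]; field_simp
  have hIωT : Complex.I * ω * T = 2 * π * Complex.I := by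
    have h : ((ω : ℂ)) * T = 2 * π := by exact_mod_cast congrArg (Complex.ofReal) hωT
    rw [mul_assoc, h]; ring
  have hexpT : Complex.exp (-(Complex.I * ω * T)) = 1 := by
    rw [hIωT, Complex.exp_neg, Complex.exp_two_pi_mul_I, inv_one]
  set e : ℝ → ℂ := fun t => Complex.exp (-(Complex.I * ω * t)) with he
  have hecont : Continuous e := by fun_prop
  have hUcont : ContinuousOn U (Set.Icc 0 T) := fun t ht =>
    (hderiv t ht).continuousAt.continuousWithinAt
  have huIcc : Set.uIcc (0:ℝ) T = Set.Icc 0 T := Set.uIcc_of_le hT0.le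
  have hint1 : IntervalIntegrable (fun t => e t • U t) MeasureTheory.volume 0 T := by
    apply ContinuousOn.intervalIntegrable
    rw [huIcc]; exact hecont.continuousOn.smul hUcont
  have hint2 : IntervalIntegrable (fun t => e t • U' t) MeasureTheory.volume 0 T := by
    apply ContinuousOn.intervalIntegrable
    rw [huIcc]; exact hecont.continuousOn.smul hcont
  have hint3 : IntervalIntegrable (fun t => (-(Complex.I * ω)) • (e t • U t))
      MeasureTheory.volume 0 T := by
    apply ContinuousOn.intervalIntegrable
    rw [huIcc]
    exact (hecont.continuousOn.smul hUcont).const_smul _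
  have hintBU : IntervalIntegrable (fun t => e t • B (U t)) MeasureTheory.volume 0 T := by
    apply ContinuousOn.intervalIntegrable
    rw [huIcc]; exact hecont.continuousOn.smul (B.continuous.comp_continuousOn hUcont)
  set J : E := ∫ t in (0:ℝ)..T, e t • U t with hJ
  -- derivative of e
  have heD : ∀ t : ℝ, HasDerivAt e (-(Complex.I * ω) * e t) t := by
    intro t
    have h0 : HasDerivAt (fun t : ℝ => (t : ℂ)) 1 t := Complex.ofRealCLM.hasDerivAt
    have h1 : HasDerivAt (fun t : ℝ => -(Complex.I * ω * t)) (-(Complex.I * ω)) t := by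
      have h := (h0.const_mul (Complex.I * ω)).neg
      rw [mul_one] at h
      exact h
    have h2 := h1.cexp
    have hd : -(Complex.I * ↑ω) * e t = e t * -(Complex.I * ↑ω) := mul_comm _ _
    rw [hd]
    exact h2
  -- integration by parts via FTC
  have hFTC : (∫ t in (0:ℝ)..T, (e t • U' t + (-(Complex.I * ω)) • (e t • U t)))
      = e T • U T - e 0 • U 0 := by
    apply intervalIntegral.integral_eq_sub_of_hasDerivAt
    · intro t ht
      rw [huIcc] at ht
      rw [smul_smul]
      exact (heD t).smul (hderiv t ht)
    · exact hint2.add hint3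
  have hFTC0 : (∫ t in (0:ℝ)..T, (e t • U' t + (-(Complex.I * ω)) • (e t • U t))) = 0 := by
    rw [hFTC, he]
    simp [hexpT, hper]
  have hsplit : (∫ t in (0:ℝ)..T, (e t • U' t + (-(Complex.I * ω)) • (e t • U t)))
      = (∫ t in (0:ℝ)..T, e t • U' t) + (-(Complex.I * ω)) • J := by
    rw [intervalIntegral.integral_add hint2 hint3]
    congr 1
    exact intervalIntegral.integral_smul (-(Complex.I * ω)) (fun t => e t • U t)
  have hkey : (∫ t in (0:ℝ)..T, e t • U' t) = (Complex.I * ω) • J := by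
    have h2 : (∫ t in (0:ℝ)..T, e t • U' t) + (-(Complex.I * ω)) • J = 0 :=
      hsplit.symm.trans hFTC0
    rw [neg_smul] at h2
    exact add_neg_eq_zero.mp h2
  -- filtering the equation
  have hptwise : ∀ t ∈ Set.Icc (0:ℝ) T,
      e t • U' t + e t • B (U t) = φp + Complex.exp (-2 * Complex.I * ω * t) • φm := by
    intro t ht
    have h := heq t ht
    calc e t • U' t + e t • B (U t) = e t • (U' t + B (U t)) := by rw [smul_add]
      _ = e t • (Complex.exp (Complex.I * ω * t) • φp
            + Complex.exp (-(Complex.I * ω * t)) • φm) := by rw [h]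
      _ = (e t * Complex.exp (Complex.I * ω * t)) • φp
            + (e t * Complex.exp (-(Complex.I * ω * t))) • φm := by
          rw [smul_add, smul_smul, smul_smul]
      _ = φp + Complex.exp (-2 * Complex.I * ω * t) • φm := by
          simp only [he]
          rw [← Complex.exp_add, ← Complex.exp_add,
            show -(Complex.I * (ω:ℂ) * t) + Complex.I * ω * t = 0 by ring,
            Complex.exp_zero, one_smul,
            show -(Complex.I * (ω:ℂ) * t) + -(Complex.I * ω * t)
              = -2 * Complex.I * ω * t by ring]
  have hc0 : (-2 : ℂ) * Complex.I * ω ≠ 0 := by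
    simp [Complex.I_ne_zero, hω.ne']
  have hexp2 : (∫ t in (0:ℝ)..T, Complex.exp ((-2 * Complex.I * ω) * t)) = 0 := by
    rw [integral_exp_mul_complex hc0]
    have : (-2 : ℂ) * Complex.I * ω * T = ((-2 : ℤ) : ℂ) * (2 * π * Complex.I) := by
      push_cast
      rw [show (-2:ℂ) * Complex.I * ω * T = -2 * (Complex.I * ω * T) by ring, hIωT]
      try ring
    rw [this, Complex.exp_int_mul_two_pi_mul_I]
    try simp
  have hrhs : (∫ t in (0:ℝ)..T, (φp + Complex.exp (-2 * Complex.I * ω * t) • φm))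
      = T • φp := by
    have hintc : IntervalIntegrable (fun _ : ℝ => φp) MeasureTheory.volume 0 T :=
      intervalIntegrable_const
    have hintm : IntervalIntegrable
        (fun t : ℝ => Complex.exp (-2 * Complex.I * ω * t) • φm) MeasureTheory.volume 0 T := by
      apply Continuous.intervalIntegrable
      fun_prop
    rw [intervalIntegral.integral_add hintc hintm,
      intervalIntegral.integral_smul_const, intervalIntegral.integral_const]
    have : (∫ t in (0:ℝ)..T, Complex.exp (-2 * Complex.I * ω * t)) = 0 := by
      rw [← hexp2]
    rw [this]
    try simp
  have hlhs : (∫ t in (0:ℝ)..T, (e t • U' t + e t • B (U t)))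
      = (Complex.I * ω) • J + B J := by
    rw [intervalIntegral.integral_add hint2 hintBU, hkey]
    congr 1
    have : (fun t => e t • B (U t)) = fun t => B (e t • U t) := by
      ext t; rw [map_smul]
    rw [this, ContinuousLinearMap.intervalIntegral_comp_comm B hint1]
  have hmain : (Complex.I * ω) • J + B J = T • φp := by
    rw [← hlhs, ← hrhs]
    exact intervalIntegral.integral_congr fun t ht => hptwise t (huIcc ▸ ht)
  -- conclude
  have hFUJ : FU = ((2 / T : ℝ) : ℂ) • J := hFU
  rw [hFUJ, smul_comm, map_smul, ← smul_add, hmain,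
    ← Complex.coe_smul T φp, smul_smul]
  have h2 : ((2 / T : ℝ) : ℂ) * (T : ℂ) = 2 := by
    have hTc : (T : ℂ) ≠ 0 := by exact_mod_cast hT0.ne'
    push_cast
    field_simp
  rw [h2]
end

section
/- Let E be a complex Banach space, B : E → E a continuous ℂ-linear map, ω > 0, T = 2π/ω, and φ₊, φ₋ ∈ E. Assume the stability bound: there is C > 0 such that ‖w‖ ≤ C ‖iω w + B w‖ for all w ∈ E. Suppose u ∈ E satisfies the time-harmonic equation iω u + B u = 2 φ₊, and U : ℝ → E is continuously differentiable on [0,T] with U'(t) + B U(t) = e^{iωt} φ₊ + e^{-iωt} φ₋ for all t ∈ [0,T]. Then the filtered field F U := (2/T) ∫₀ᵀ U(t) e^{-iωt} dt satisfies the error estimate ‖u − F U‖ ≤ (ω C / π) ‖U(T) − U(0)‖. -/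
open Real intervalIntegral

/-- Error estimate: filtering a nearly periodic solution approximates the time-harmonic
solution, with error controlled by the periodicity misfit. -/
theorem stmt_4
    (E : Type*) [NormedAddCommGroup E] [NormedSpace ℂ E] [CompleteSpace E]
    (B : E →L[ℂ] E) (ω : ℝ) (hω : 0 < ω) (T : ℝ) (hT : T = 2 * π / ω)
    (φp φm : E) (C : ℝ) (hC : 0 < C)
    (hstab : ∀ w : E, ‖w‖ ≤ C * ‖(Complex.I * ω) • w + B w‖)
    (u : E) (hu : (Complex.I * ω) • u + B u = (2 : ℂ) • φp)
    (U U' : ℝ → E)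
    (hderiv : ∀ t ∈ Set.Icc (0 : ℝ) T, HasDerivAt U (U' t) t)
    (hcont : ContinuousOn U' (Set.Icc (0 : ℝ) T))
    (heq : ∀ t ∈ Set.Icc (0 : ℝ) T,
      U' t + B (U t) = Complex.exp (Complex.I * ω * t) • φp
        + Complex.exp (-(Complex.I * ω * t)) • φm)
    (FU : E)
    (hFU : FU = ((2 / T : ℝ) : ℂ) • ∫ t in (0 : ℝ)..T, Complex.exp (-(Complex.I * ω * t)) • U t) :
    ‖u - FU‖ ≤ (ω * C / π) * ‖U T - U 0‖ := by
  have hω' : (ω : ℂ) ≠ 0 := by exact_mod_cast hω.ne'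
  have hT0 : 0 < T := by rw [hT]; positivity
  set c : ℂ := Complex.I * ω with hc
  have hcne : c ≠ 0 := mul_ne_zero Complex.I_ne_zero hω'
  have huIcc : Set.uIcc (0:ℝ) T = Set.Icc 0 T := Set.uIcc_of_le hT0.le
  have hUcont : ContinuousOn U (Set.Icc 0 T) := fun t ht =>
    (hderiv t ht).continuousAt.continuousWithinAt
  -- derivative of the exponential weight
  have hlin : ∀ t : ℝ, HasDerivAt (fun s : ℝ => -(c * s)) (-c) t := by
    intro t
    have h1 : HasDerivAt (fun s : ℝ => (s : ℂ)) 1 t := by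
      exact Complex.ofRealCLM.hasDerivAt
    have h2 := (h1.const_mul c).neg
    rw [mul_one] at h2
    exact h2
  have hexp : ∀ t : ℝ, HasDerivAt (fun s : ℝ => Complex.exp (-(c * s)))
      (Complex.exp (-(c * t)) * -c) t := fun t => (hlin t).cexp
  have hexpc : Continuous fun t : ℝ => Complex.exp (-(c * t)) :=
    by fun_prop
  -- special values of the exponential
  have hexpT : Complex.exp (-(c * T)) = 1 := by
    have h : -(c * T) = (-1 : ℤ) * (2 * π * Complex.I) := by
      rw [hc, hT]; push_cast; field_simp
    rw [h, Complex.exp_int_mul_two_pi_mul_I]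
  have hexp2T : Complex.exp ((-2 * c) * T) = 1 := by
    have h : (-2 * c) * T = (-2 : ℤ) * (2 * π * Complex.I) := by
      rw [hc, hT]; push_cast; field_simp
    rw [h, Complex.exp_int_mul_two_pi_mul_I]
  set J : E := ∫ t in (0:ℝ)..T, Complex.exp (-(c * t)) • U t with hJ
  -- fundamental theorem of calculus for the weighted field
  have hInt1 : IntervalIntegrable (fun t => Complex.exp (-(c * t)) • U t)
      MeasureTheory.volume 0 T :=
    (hexpc.continuousOn.smul hUcont).intervalIntegrable_of_Icc hT0.le
  have hInt2 : IntervalIntegrable (fun t => Complex.exp (-(c * t)) • U' t)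
      MeasureTheory.volume 0 T :=
    (hexpc.continuousOn.smul hcont).intervalIntegrable_of_Icc hT0.le
  have hInt3 : IntervalIntegrable (fun t => (Complex.exp (-(c * t)) * -c) • U t)
      MeasureTheory.volume 0 T :=
    ((hexpc.mul continuous_const).continuousOn.smul hUcont).intervalIntegrable_of_Icc hT0.le
  have key : (∫ t in (0:ℝ)..T,
      (Complex.exp (-(c * t)) • U' t + (Complex.exp (-(c * t)) * -c) • U t))
      = U T - U 0 := by
    have := intervalIntegral.integral_eq_sub_of_hasDerivAt
      (f := fun s => Complex.exp (-(c * s)) • U s)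
      (f' := fun t => Complex.exp (-(c * t)) • U' t + (Complex.exp (-(c * t)) * -c) • U t)
      (a := 0) (b := T)
      (fun t ht => (hexp t).smul (hderiv t (huIcc ▸ ht)))
      (hInt2.add hInt3)
    rw [this]
    simp [hexpT]
  -- compute the integral of the weighted derivative using the PDE
  have hBJ : (∫ t in (0:ℝ)..T, Complex.exp (-(c * t)) • B (U t)) = B J := by
    rw [hJ, ← B.intervalIntegral_comp_comm hInt1]
    simp
  have hstep : (∫ t in (0:ℝ)..T, Complex.exp (-(c * t)) • U' t)
      = -(B J) + (T : ℂ) • φp := by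
    have hEq : Set.EqOn (fun t : ℝ => Complex.exp (-(c * t)) • U' t)
        (fun t : ℝ => -(Complex.exp (-(c * t)) • B (U t)) + φp
          + Complex.exp ((-2 * c) * t) • φm) (Set.uIcc 0 T) := by
      rw [huIcc]
      intro t ht
      have hU' : U' t = Complex.exp (c * t) • φp + Complex.exp (-(c * t)) • φm - B (U t) :=
        eq_sub_of_add_eq (heq t ht)
      simp only
      rw [hU', smul_sub, smul_add, smul_smul, smul_smul, ← Complex.exp_add, ← Complex.exp_add,
        show -(c * (t:ℂ)) + c * t = 0 by ring,
        show -(c * (t:ℂ)) + -(c * t) = (-2 * c) * t by ring,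
        Complex.exp_zero, one_smul]
      abel
    have hIa : IntervalIntegrable (fun t : ℝ => -(Complex.exp (-(c * t)) • B (U t)))
        MeasureTheory.volume 0 T :=
      ((hexpc.continuousOn.smul (B.continuous.comp_continuousOn hUcont)).intervalIntegrable_of_Icc
        hT0.le).neg
    have hIb : IntervalIntegrable (fun _ : ℝ => φp) MeasureTheory.volume 0 T :=
      intervalIntegrable_const
    have hIc : IntervalIntegrable (fun t : ℝ => Complex.exp ((-2 * c) * t) • φm)
        MeasureTheory.volume 0 T := Continuous.intervalIntegrable (by fun_prop) _ _
    rw [intervalIntegral.integral_congr hEq,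
      intervalIntegral.integral_add (hIa.add hIb) hIc,
      intervalIntegral.integral_add hIa hIb,
      intervalIntegral.integral_neg, hBJ, intervalIntegral.integral_const,
      intervalIntegral.integral_smul_const,
      integral_exp_mul_complex (mul_ne_zero (by norm_num) hcne)]
    rw [hexp2T]
    push_cast
    simp [sub_zero, Complex.real_smul]
  have h3 : (∫ t in (0:ℝ)..T, (Complex.exp (-(c * t)) * -c) • U t) = (-c) • J := by
    rw [hJ, ← intervalIntegral.integral_smul]
    congr 1
    funext t
    rw [smul_smul, mul_comm]
  have keyJ : c • J + B J = (T : ℂ) • φp - (U T - U 0) := by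
    rw [intervalIntegral.integral_add hInt2 hInt3, hstep, h3] at key
    rw [← key]
    module
  have h2 : ((2 / T : ℝ) : ℂ) * (T : ℂ) = 2 := by
    have hTne : (T : ℂ) ≠ 0 := by exact_mod_cast hT0.ne'
    push_cast
    field_simp
  have keyJ2 : ((2 / T : ℝ) : ℂ) • (c • J + B J)
      = (2 : ℂ) • φp - ((2 / T : ℝ) : ℂ) • (U T - U 0) := by
    rw [keyJ, smul_sub, smul_smul, h2]
  have hwEq : c • (u - FU) + B (u - FU) = ((2 / T : ℝ) : ℂ) • (U T - U 0) := by
    have hBFU : B FU = ((2 / T : ℝ) : ℂ) • B J := by rw [hFU, map_smul]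
    have hcFU : c • FU = ((2 / T : ℝ) : ℂ) • (c • J) := by rw [hFU]; exact smul_comm _ _ _
    rw [smul_sub, map_sub, hBFU, hcFU]
    have hre : c • u - ((2 / T : ℝ) : ℂ) • (c • J) + (B u - ((2 / T : ℝ) : ℂ) • B J)
        = (c • u + B u) - ((2 / T : ℝ) : ℂ) • (c • J + B J) := by
      rw [smul_add]; abel
    rw [hre, hu, keyJ2]
    abel
  have hb := hstab (u - FU)
  rw [hwEq] at hb
  have hns : ‖((2 / T : ℝ) : ℂ) • (U T - U 0)‖ = (2 / T) * ‖U T - U 0‖ := by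
    rw [norm_smul, Complex.norm_real, Real.norm_eq_abs, abs_of_pos (by positivity)]
  have h2T : 2 / T = ω / π := by
    rw [hT]
    field_simp
  calc ‖u - FU‖ ≤ C * ((2 / T) * ‖U T - U 0‖) := by rw [← hns]; exact hb
    _ = (ω * C / π) * ‖U T - U 0‖ := by rw [h2T]; ring
end

section
/- Let E be a complex Banach space, B : E → E a continuous ℂ-linear map, ω > 0, T = 2π/ω, and φ₊, φ₋ ∈ E. Suppose U : ℝ → E is continuously differentiable on [0,T], satisfies U'(t) + B U(t) = e^{iωt} φ₊ + e^{-iωt} φ₋ for all t ∈ [0,T], and U(T) = U(0). Then for every integer ℓ with |ℓ| ≥ 2, the Fourier component U_ℓ := (2/T) ∫₀ᵀ U(t) e^{-iℓωt} dt satisfies the homogeneous time-harmonic equation at frequency ℓω: iℓω U_ℓ + B U_ℓ = 0. -/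
open Real intervalIntegral

/-- The higher harmonics of any `T`-periodic solution are homogeneous time-harmonic
solutions at the multiplied frequencies `ℓω`. -/
theorem stmt_6
    (E : Type*) [NormedAddCommGroup E] [NormedSpace ℂ E] [CompleteSpace E]
    (B : E →L[ℂ] E) (ω : ℝ) (hω : 0 < ω) (T : ℝ) (hT : T = 2 * π / ω)
    (φp φm : E) (U U' : ℝ → E)
    (hderiv : ∀ t ∈ Set.Icc (0 : ℝ) T, HasDerivAt U (U' t) t)
    (hcont : ContinuousOn U' (Set.Icc (0 : ℝ) T))
    (heq : ∀ t ∈ Set.Icc (0 : ℝ) T,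
      U' t + B (U t) = Complex.exp (Complex.I * ω * t) • φp
        + Complex.exp (-(Complex.I * ω * t)) • φm)
    (hper : U T = U 0) :
    ∀ ℓ : ℤ, 2 ≤ |ℓ| →
      ∀ Uℓ : E,
        Uℓ = ((2 / T : ℝ) : ℂ) • ∫ t in (0 : ℝ)..T, Complex.exp (-(Complex.I * ℓ * ω * t)) • U t →
        (Complex.I * ℓ * ω) • Uℓ + B Uℓ = 0 := by
  intro ℓ hℓ Uℓ hUℓ
  have hT0 : 0 < T := by rw [hT]; positivity
  have hIcc : Set.uIcc (0:ℝ) T = Set.Icc 0 T := Set.uIcc_of_le hT0.le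
  have hω' : (ω : ℂ) ≠ 0 := by exact_mod_cast hω.ne'
  set c : ℂ := -(Complex.I * ℓ * ω) with hc
  have hUcont : ContinuousOn U (Set.Icc 0 T) := fun t ht =>
    (hderiv t ht).continuousAt.continuousWithinAt
  have hg : Continuous fun t : ℝ => Complex.exp (c * t) := by fun_prop
  have hgderiv : ∀ t : ℝ, HasDerivAt (fun s : ℝ => Complex.exp (c * s))
      (c * Complex.exp (c * t)) t := by
    intro t
    have h0 : HasDerivAt (fun s : ℝ => c * (s : ℂ)) c t := by
      simpa using (Complex.ofRealCLM.hasDerivAt (x := t)).const_mul c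
    simpa [mul_comm] using h0.cexp
  -- continuity / integrability facts
  have hA : ContinuousOn (fun t : ℝ => (c * Complex.exp (c*t)) • U t) (Set.Icc 0 T) :=
    ((continuous_const.mul hg).continuousOn).smul hUcont
  have hBcont : ContinuousOn (fun t : ℝ => Complex.exp (c*t) • U t) (Set.Icc 0 T) :=
    hg.continuousOn.smul hUcont
  have hCcont : ContinuousOn (fun t : ℝ => Complex.exp (c*t) • U' t) (Set.Icc 0 T) :=
    hg.continuousOn.smul hcont
  have hintA : IntervalIntegrable (fun t : ℝ => (c * Complex.exp (c*t)) • U t)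
      MeasureTheory.volume 0 T := (hIcc ▸ hA).intervalIntegrable
  have hintB : IntervalIntegrable (fun t : ℝ => Complex.exp (c*t) • U t)
      MeasureTheory.volume 0 T := (hIcc ▸ hBcont).intervalIntegrable
  have hintC : IntervalIntegrable (fun t : ℝ => Complex.exp (c*t) • U' t)
      MeasureTheory.volume 0 T := (hIcc ▸ hCcont).intervalIntegrable
  -- scalar exponential integrals vanish
  have key : ∀ k : ℤ, k ≠ 0 → (∫ t in (0:ℝ)..T, Complex.exp ((Complex.I * k * ω) * t)) = 0 := by
    intro k hk
    have hk' : (k : ℂ) ≠ 0 := Int.cast_ne_zero.mpr hk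
    have ha : Complex.I * k * ω ≠ 0 := by
      apply mul_ne_zero (mul_ne_zero Complex.I_ne_zero hk') hω'
    rw [integral_exp_mul_complex ha]
    have h1 : (Complex.I * k * ω) * T = (k : ℤ) * (2*π*Complex.I) := by
      rw [hT]; push_cast; field_simp
    rw [h1, Complex.exp_int_mul_two_pi_mul_I]
    simp
  -- exp(cT) = 1
  have hexpT : Complex.exp (c * T) = 1 := by
    have h1 : c * T = ((-ℓ : ℤ) : ℂ) * (2*π*Complex.I) := by
      rw [hc, hT]; push_cast; field_simp
    rw [h1, Complex.exp_int_mul_two_pi_mul_I]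
  -- FTC
  have hFTC : (∫ t in (0:ℝ)..T, ((c * Complex.exp (c*t)) • U t + Complex.exp (c*t) • U' t))
      = Complex.exp (c*T) • U T - Complex.exp (c*(0:ℝ)) • U 0 := by
    apply intervalIntegral.integral_eq_sub_of_hasDerivAt
    · intro t ht
      have h := (hgderiv t).smul (hderiv t (hIcc ▸ ht))
      rw [add_comm] at h; exact h
    · exact hintA.add hintC
  have hFTC0 : (∫ t in (0:ℝ)..T, ((c * Complex.exp (c*t)) • U t + Complex.exp (c*t) • U' t)) = 0 := by
    rw [hFTC, hexpT, hper]
    simp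
  have hsplit : (∫ t in (0:ℝ)..T, (c * Complex.exp (c*t)) • U t)
      + (∫ t in (0:ℝ)..T, Complex.exp (c*t) • U' t) = 0 := by
    rw [← intervalIntegral.integral_add hintA hintC]; exact hFTC0
  set I₀ : E := ∫ t in (0:ℝ)..T, Complex.exp (c*t) • U t with hI₀
  have hAI : (∫ t in (0:ℝ)..T, (c * Complex.exp (c*t)) • U t) = c • I₀ := by
    simp_rw [mul_smul]
    rw [intervalIntegral.integral_smul]
  -- compute ∫ exp(ct) • U' t
  have hℓ1 : ℓ ≠ 1 := by rintro rfl; norm_num at hℓ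
  have hℓm1 : ℓ ≠ -1 := by rintro rfl; norm_num at hℓ
  have hforce : (∫ t in (0:ℝ)..T, Complex.exp (c*t) •
      (Complex.exp (Complex.I * ω * t) • φp + Complex.exp (-(Complex.I * ω * t)) • φm)) = 0 := by
    have hrw : ∀ t : ℝ, Complex.exp (c*t) •
        (Complex.exp (Complex.I * ω * t) • φp + Complex.exp (-(Complex.I * ω * t)) • φm)
        = Complex.exp (Complex.I * ((1 - ℓ : ℤ) : ℂ) * ω * t) • φp
          + Complex.exp (Complex.I * ((-1 - ℓ : ℤ) : ℂ) * ω * t) • φm := by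
      intro t
      rw [smul_add, smul_smul, smul_smul, ← Complex.exp_add, ← Complex.exp_add]
      congr 2 <;> (rw [hc]; push_cast; ring)
    simp_rw [hrw]
    rw [intervalIntegral.integral_add, intervalIntegral.integral_smul_const,
      intervalIntegral.integral_smul_const, key (1 - ℓ) (by omega), key (-1 - ℓ) (by omega)]
    · simp
    · exact (Continuous.intervalIntegrable (by fun_prop) 0 T)
    · exact (Continuous.intervalIntegrable (by fun_prop) 0 T)
  have hBI : (∫ t in (0:ℝ)..T, Complex.exp (c*t) • B (U t)) = B I₀ := by
    have : (fun t : ℝ => Complex.exp (c*t) • B (U t))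
        = fun t : ℝ => B (Complex.exp (c*t) • U t) := by
      funext t; rw [map_smul]
    rw [this, ← ContinuousLinearMap.intervalIntegral_comp_comm _ hintB]
  have hU'I : (∫ t in (0:ℝ)..T, Complex.exp (c*t) • U' t) = - B I₀ := by
    have hcongr : (∫ t in (0:ℝ)..T, Complex.exp (c*t) • U' t)
        = ∫ t in (0:ℝ)..T, (Complex.exp (c*t) •
            (Complex.exp (Complex.I * ω * t) • φp + Complex.exp (-(Complex.I * ω * t)) • φm)
          - Complex.exp (c*t) • B (U t)) := by
      apply intervalIntegral.integral_congr
      intro t ht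
      rw [hIcc] at ht
      have := heq t ht
      have hU' : U' t = (Complex.exp (Complex.I * ω * t) • φp
          + Complex.exp (-(Complex.I * ω * t)) • φm) - B (U t) := by
        rw [← this]; abel
      dsimp only
      rw [hU', smul_sub]
    rw [hcongr, intervalIntegral.integral_sub, hforce, hBI, zero_sub]
    · exact (Continuous.intervalIntegrable (by fun_prop) 0 T)
    · have : ContinuousOn (fun t : ℝ => Complex.exp (c*t) • B (U t)) (Set.Icc 0 T) :=
        hg.continuousOn.smul (B.continuous.comp_continuousOn hUcont)
      exact (hIcc ▸ this).intervalIntegrable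
  -- conclude
  have hmain : c • I₀ = B I₀ := by
    have := hsplit
    rw [hAI, hU'I] at this
    linear_combination (norm := module) this
  have hI₀eq : Uℓ = ((2 / T : ℝ) : ℂ) • I₀ := by
    have hfe : (fun t : ℝ => Complex.exp (-(Complex.I * ℓ * ω * t)) • U t)
        = fun t : ℝ => Complex.exp (c * t) • U t := by
      funext t
      rw [show -(Complex.I * ℓ * ω * (t:ℂ)) = c * t by rw [hc]; ring]
    rw [hUℓ, hI₀, hfe]
  rw [hI₀eq, smul_comm, map_smul, ← smul_add]
  have : (Complex.I * ℓ * ω) • I₀ + B I₀ = 0 := by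
    rw [← hmain, hc]
    simp [neg_smul]
  rw [this, smul_zero]
end

section
/- Let E be a real Hilbert space, B : E → E a continuous linear map satisfying the monotonicity condition ⟨B v, v⟩ ≥ 0 for all v ∈ E, let T > 0, let F : ℝ → E be continuous, and let U : ℝ → E be continuously differentiable on [0,T] with U'(t) + B U(t) = F(t) for all t ∈ [0,T]. Then ‖U(T)‖ ≤ ‖U(0)‖ + ∫₀ᵀ ‖F(t)‖ dt. -/
open Real intervalIntegral

/-- A priori energy estimate for a monotone evolution operator:
`‖U(T)‖ ≤ ‖U(0)‖ + ∫₀ᵀ ‖F(t)‖ dt`. -/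
theorem stmt_11
    (E : Type*) [NormedAddCommGroup E] [InnerProductSpace ℝ E] [CompleteSpace E]
    (B : E →L[ℝ] E) (hB : ∀ v : E, (0 : ℝ) ≤ inner ℝ (B v) v)
    (T : ℝ) (hT : 0 < T)
    (F : ℝ → E) (hF : Continuous F)
    (U U' : ℝ → E)
    (hderiv : ∀ t ∈ Set.Icc (0 : ℝ) T, HasDerivAt U (U' t) t)
    (hcont : ContinuousOn U' (Set.Icc (0 : ℝ) T))
    (heq : ∀ t ∈ Set.Icc (0 : ℝ) T, U' t + B (U t) = F t) :
    ‖U T‖ ≤ ‖U 0‖ + ∫ t in (0 : ℝ)..T, ‖F t‖ := by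
  set f : ℝ → ℝ := fun t => ‖U t‖ with hf
  set Bd : ℝ → ℝ := fun t => ‖U 0‖ + ∫ s in (0:ℝ)..t, ‖F s‖ with hBd
  have hfc : ContinuousOn f (Set.Icc 0 T) := by
    apply ContinuousOn.norm
    intro t ht
    exact (hderiv t ht).continuousAt.continuousWithinAt
  have hBc : ∀ x : ℝ, HasDerivAt Bd ‖F x‖ x := by
    intro x
    exact (HasDerivAt.const_add _ ((hF.norm.integral_hasStrictDerivAt 0 x).hasDerivAt))
  have key : ∀ ⦃x⦄, x ∈ Set.Icc (0:ℝ) T → f x ≤ Bd x := by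
    apply image_le_of_liminf_slope_right_le_deriv_boundary hfc
    · simp [hBd, hf]
    · exact fun x _ => (hBc x).continuousAt.continuousWithinAt
    · exact fun x _ => (hBc x).hasDerivWithinAt
    · intro x hx r hr
      have hx' : x ∈ Set.Icc (0:ℝ) T := Set.Ico_subset_Icc_self hx
      have hU := hderiv x hx'
      by_cases h0 : U x = 0
      · -- f has right slope tending to ‖U' x‖ = ‖F x‖
        have hU' : U' x = F x := by
          have := heq x hx'; rwa [h0, map_zero, add_zero] at this
        have hslope : Filter.Tendsto (slope U x) (nhdsWithin x {x}ᶜ) (nhds (U' x)) :=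
          hasDerivAt_iff_tendsto_slope.1 hU
        have hnorm : Filter.Tendsto (fun z => ‖slope U x z‖) (nhdsWithin x (Set.Ioi x))
            (nhds ‖U' x‖) :=
          (hslope.norm).mono_left (nhdsWithin_mono x (fun z hz => ne_of_gt hz))
        have hev : ∀ᶠ z in nhdsWithin x (Set.Ioi x), ‖slope U x z‖ < r := by
          apply hnorm.eventually_lt_const
          rwa [hU']
        have hev2 : ∀ᶠ z in nhdsWithin x (Set.Ioi x), slope f x z < r := by
          filter_upwards [hev, self_mem_nhdsWithin] with z hz hz'
          have hzx : (0:ℝ) < z - x := sub_pos.2 hz'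
          calc slope f x z = (‖U z‖ - ‖U x‖) / (z - x) := slope_def_field f x z
            _ ≤ ‖U z - U x‖ / (z - x) := by
                exact div_le_div_of_nonneg_right (norm_sub_norm_le _ _) hzx.le
            _ = ‖slope U x z‖ := by
                rw [slope_def_module]
                rw [norm_smul, norm_inv, Real.norm_eq_abs, abs_of_pos hzx,
                  div_eq_inv_mul]
            _ < r := hz
        exact hev2.frequently
      · -- norm is differentiable, derivative ⟪U x, U' x⟫ / ‖U x‖ ≤ ‖F x‖
        have hsq : HasDerivAt (fun t => ‖U t‖ ^ 2) (2 * inner ℝ (U x) (U' x)) x := hU.norm_sq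
        have hnz : ‖U x‖ ^ 2 ≠ 0 := pow_ne_zero 2 (norm_ne_zero_iff.2 h0)
        have hsqrt : HasDerivAt f ((2 * inner ℝ (U x) (U' x)) / (2 * Real.sqrt (‖U x‖ ^ 2))) x := by
          have := hsq.sqrt hnz
          convert this using 2 with t
          simp [hf, Real.sqrt_sq (norm_nonneg _)]
        have hval : (2 * (inner ℝ (U x) (U' x) : ℝ)) / (2 * Real.sqrt (‖U x‖ ^ 2))
            = inner ℝ (U x) (U' x) / ‖U x‖ := by
          rw [Real.sqrt_sq (norm_nonneg _), mul_div_mul_left _ _ (two_ne_zero)]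
        rw [hval] at hsqrt
        have hle : (inner ℝ (U x) (U' x) : ℝ) / ‖U x‖ ≤ ‖F x‖ := by
          have hU'eq : U' x = F x - B (U x) := by
            have := heq x hx'; linear_combination (norm := module) this
          rw [div_le_iff₀ (norm_pos_iff.2 h0), hU'eq, inner_sub_right]
          have h1 : (inner ℝ (U x) (F x) : ℝ) ≤ ‖F x‖ * ‖U x‖ := by
            calc (inner ℝ (U x) (F x) : ℝ) ≤ ‖U x‖ * ‖F x‖ := real_inner_le_norm _ _
              _ = ‖F x‖ * ‖U x‖ := mul_comm _ _
          have h2 : (0:ℝ) ≤ inner ℝ (U x) (B (U x)) := by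
            rw [real_inner_comm]; exact hB (U x)
          linarith
        exact (hsqrt.hasDerivWithinAt (s := Set.Ici x)).liminf_right_slope_le
          (lt_of_le_of_lt hle hr)
  exact key (Set.right_mem_Icc.2 hT.le)
end

section
/- Let E be a complex Banach space, B : E → E a continuous ℂ-linear map, ω > 0, T = 2π/ω, and C > 0 such that ‖w‖ ≤ C ‖iω w + B w‖ for all w ∈ E. Suppose V : ℝ → E is continuously differentiable on [0,T] and satisfies the homogeneous evolution equation V'(t) + B V(t) = 0 for all t ∈ [0,T]. Then the filtered field satisfies ‖(2/T) ∫₀ᵀ V(t) e^{-iωt} dt‖ ≤ (ω C / π) ‖V(0) − V(T)‖. -/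
open Real intervalIntegral

/-- Strong convexity estimate: for a homogeneous evolution `V' + B V = 0`, the filtered
field is controlled by the periodicity misfit, `‖F V‖ ≤ (ωC/π)‖V(0) - V(T)‖`. -/
theorem stmt_15
    (E : Type*) [NormedAddCommGroup E] [NormedSpace ℂ E] [CompleteSpace E]
    (B : E →L[ℂ] E) (ω : ℝ) (hω : 0 < ω) (T : ℝ) (hT : T = 2 * π / ω)
    (C : ℝ) (hC : 0 < C)
    (hstab : ∀ w : E, ‖w‖ ≤ C * ‖(Complex.I * ω) • w + B w‖)
    (V V' : ℝ → E)
    (hderiv : ∀ t ∈ Set.Icc (0 : ℝ) T, HasDerivAt V (V' t) t)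
    (hcont : ContinuousOn V' (Set.Icc (0 : ℝ) T))
    (heq : ∀ t ∈ Set.Icc (0 : ℝ) T, V' t + B (V t) = 0) :
    ‖((2 / T : ℝ) : ℂ) • ∫ t in (0 : ℝ)..T, Complex.exp (-(Complex.I * ω * t)) • V t‖
      ≤ (ω * C / π) * ‖V 0 - V T‖ := by
  have hπ := Real.pi_pos
  have hT0 : 0 < T := by rw [hT]; positivity
  have huIcc : Set.uIcc (0:ℝ) T = Set.Icc 0 T := Set.uIcc_of_le hT0.le
  set c : ℝ → ℂ := fun t => Complex.exp (-(Complex.I * ω * t)) with hc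
  have hc_cont : Continuous c := by
    apply Complex.continuous_exp.comp
    continuity
  have hc_deriv : ∀ t : ℝ, HasDerivAt c (-(Complex.I * ω) * c t) t := by
    intro t
    have h0 : HasDerivAt (fun t : ℝ => (t : ℂ)) 1 t := by
      simpa using (hasDerivAt_id t).ofReal_comp
    have h1 : HasDerivAt (fun t : ℝ => -(Complex.I * (ω:ℂ)) * (t : ℂ)) (-(Complex.I * ω)) t := by
      simpa using h0.const_mul (-(Complex.I * (ω:ℂ)))
    have h2 := h1.cexp
    simp only [neg_mul] at h2
    simpa [hc, mul_comm] using h2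
  have hVcont : ContinuousOn V (Set.Icc 0 T) := fun t ht =>
    (hderiv t ht).continuousAt.continuousWithinAt
  have hint1 : IntervalIntegrable (fun t => c t • V t) MeasureTheory.volume 0 T := by
    apply ContinuousOn.intervalIntegrable
    rw [huIcc]
    exact hc_cont.continuousOn.smul hVcont
  have hg : ∀ t ∈ Set.uIcc (0:ℝ) T,
      HasDerivAt (fun t => c t • V t) ((-(Complex.I * ω) * c t) • V t + c t • V' t) t := by
    intro t ht
    rw [huIcc] at ht
    have h := (hc_deriv t).smul (hderiv t ht)
    rw [add_comm] at h
    exact h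
  have hg'int : IntervalIntegrable
      (fun t => (-(Complex.I * ω) * c t) • V t + c t • V' t) MeasureTheory.volume 0 T := by
    apply ContinuousOn.intervalIntegrable
    rw [huIcc]
    exact ((continuous_const.mul hc_cont).continuousOn.smul hVcont).add
      (hc_cont.continuousOn.smul hcont)
  have hFTC := intervalIntegral.integral_eq_sub_of_hasDerivAt hg hg'int
  have hcT : c T = 1 := by
    have harg : -(Complex.I * ω * T) = (-1 : ℤ) * (2 * π * Complex.I) := by
      have hωT : (ω : ℂ) * (T : ℂ) = 2 * π := by
        have h : ω * T = 2 * π := by rw [hT]; field_simp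
        exact_mod_cast congrArg Complex.ofReal h
      have h2 : Complex.I * (ω:ℂ) * (T:ℂ) = 2 * ↑π * Complex.I := by
        calc Complex.I * (ω:ℂ) * (T:ℂ) = ((ω:ℂ) * (T:ℂ)) * Complex.I := by ring
        _ = 2 * ↑π * Complex.I := by rw [hωT]
      rw [h2]; push_cast; ring
    rw [hc]; simp only [harg]
    exact_mod_cast Complex.exp_int_mul_two_pi_mul_I (-1)
  have hc0 : c 0 = 1 := by simp [hc]
  rw [hcT, hc0, one_smul, one_smul] at hFTC
  set w : E := ∫ t in (0:ℝ)..T, c t • V t with hw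
  have hintB : IntervalIntegrable (fun t => B (c t • V t)) MeasureTheory.volume 0 T := by
    apply ContinuousOn.intervalIntegrable
    rw [huIcc]
    exact B.continuous.comp_continuousOn (hc_cont.continuousOn.smul hVcont)
  have hkey : (Complex.I * ω) • w + B w = V 0 - V T := by
    have hBw : B w = ∫ t in (0:ℝ)..T, B (c t • V t) :=
      (B.intervalIntegral_comp_comm hint1).symm
    have hsw : (Complex.I * ω) • w = ∫ t in (0:ℝ)..T, (Complex.I * ω) • (c t • V t) := by
      rw [hw, intervalIntegral.integral_smul]
    have hint2 : IntervalIntegrable (fun t => (Complex.I * (ω:ℂ)) • (c t • V t))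
        MeasureTheory.volume 0 T := by
      apply ContinuousOn.intervalIntegrable
      rw [huIcc]
      exact (hc_cont.continuousOn.smul hVcont).const_smul _
    rw [hBw, hsw, ← intervalIntegral.integral_add hint2 hintB]
    have hcongr : (∫ t in (0:ℝ)..T, ((Complex.I * ω) • (c t • V t) + B (c t • V t)))
        = ∫ t in (0:ℝ)..T, -((-(Complex.I * ω) * c t) • V t + c t • V' t) := by
      apply intervalIntegral.integral_congr
      intro t ht
      rw [huIcc] at ht
      have hV' : V' t = -(B (V t)) := eq_neg_of_add_eq_zero_left (heq t ht)
      simp only [hV', map_smul, smul_smul, neg_mul, neg_smul, smul_neg, neg_add_rev,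
        neg_neg]
      abel
    rw [hcongr, intervalIntegral.integral_neg, hFTC]
    abel
  have hwle : ‖w‖ ≤ C * ‖V 0 - V T‖ := by
    calc ‖w‖ ≤ C * ‖(Complex.I * ω) • w + B w‖ := hstab w
    _ = C * ‖V 0 - V T‖ := by rw [hkey]
  rw [norm_smul]
  have hnorm : ‖((2 / T : ℝ) : ℂ)‖ = 2 / T := by
    rw [Complex.norm_real, Real.norm_eq_abs, abs_of_pos (by positivity)]
  rw [hnorm]
  calc 2 / T * ‖w‖ ≤ 2 / T * (C * ‖V 0 - V T‖) := by
        apply mul_le_mul_of_nonneg_left hwle (by positivity)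
  _ = (ω * C / π) * ‖V 0 - V T‖ := by
        rw [hT]; field_simp
end
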